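/- Let X ⊆ Σ^ℤ be a subshift with property g and property (D), and let g be a strict g-function for X. Then the admissible words of X are exactly the finite words a such that μ(x⁻)(C(a)) > 0 for some x⁻ ∈ X⁻; in particular, for all admissible words a and b of X with a ∈ ω⁺(b) and every x⁻ ∈ X⁻ ending in b, one has μ(x⁻)(C(a)) > 0. -/

import Mathlib

open Set Filter Topology

/-! Basic symbolic dynamics notions.

* The alphabet is a nonempty finite type `A` with the discrete topology; `A^ℤ` and `A^ℕ`
  carry the product topology.
* A left-infinite sequence `x⁻ = (x_i)_{i ≤ 0}` is encoded as `u : ℕ → A` with `u n = x (-n)`.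
* Finite words are lists, read left to right.
-/

/-- The shift `S`. -/
def shiftMap {A : Type*} (x : ℤ → A) : ℤ → A := fun i => x (i + 1)

/-- A subshift: a nonempty closed shift-invariant subset of `A^ℤ`. -/
def IsSubshift {A : Type*} [TopologicalSpace A] (X : Set (ℤ → A)) : Prop :=
  X.Nonempty ∧ IsClosed X ∧ shiftMap '' X = X

/-- `X⁻`: the left-infinite rays of points of `X` (encoded via `u n = x (-n)`). -/
def Xminus {A : Type*} (X : Set (ℤ → A)) : Set (ℕ → A) :=
  {u | ∃ x ∈ X, ∀ n : ℕ, u n = x (-(n : ℤ))}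

/-- The word `w` occurs in `x` (as a block of consecutive coordinates). -/
def Occurs {A : Type*} (w : List A) (x : ℤ → A) : Prop :=
  ∃ i : ℤ, ∀ j : Fin w.length, x (i + ((j : ℕ) : ℤ)) = w.get j

/-- A finite word is admissible for `X` if it occurs in some point of `X`. -/
def Admissible {A : Type*} (X : Set (ℤ → A)) (w : List A) : Prop :=
  ∃ x ∈ X, Occurs w x

/-- The left ray `u` ends in the word `w`, i.e. `(x_{-k},…,x_0) = w` where `|w| = k+1`. -/
def EndsIn {A : Type*} (u : ℕ → A) (w : List A) : Prop :=
  ∀ j : Fin w.length, u (w.length - 1 - (j : ℕ)) = w.get j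

/-- `Γ₁⁺(x⁻)`: the letters that can follow the left ray `u` in `X`. -/
def Gamma1 {A : Type*} (X : Set (ℤ → A)) (u : ℕ → A) : Set A :=
  {σ | ∃ x ∈ X, (∀ n : ℕ, x (-(n : ℤ)) = u n) ∧ x 1 = σ}

/-- `x` carries the word `b` on the coordinate interval `[-(|b| - 1), 0]`. -/
def EndsAtZero {A : Type*} (x : ℤ → A) (b : List A) : Prop :=
  ∀ j : Fin b.length, x (((j : ℕ) : ℤ) - ((b.length : ℤ) - 1)) = b.get j

/-- `c ∈ ω⁺(b)`: every point of `X` carrying `b` ending at coordinate `0` can be modified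
on the positive coordinates so as to continue with the word `c`. -/
def OmegaWord {A : Type*} (X : Set (ℤ → A)) (b c : List A) : Prop :=
  ∀ x ∈ X, EndsAtZero x b →
    ∃ x' ∈ X, (∀ i : ℤ, i ≤ 0 → x' i = x i) ∧
      ∀ j : Fin c.length, x' (((j : ℕ) : ℤ) + 1) = c.get j

/-- `ω₁⁺(b)`. -/
def omega1 {A : Type*} (X : Set (ℤ → A)) (b : List A) : Set A :=
  {σ | OmegaWord X b [σ]}

/-- The word `(x_{-n},…,x_0)` read off the left ray `u`. -/
def lastWord {A : Type*} (u : ℕ → A) (n : ℕ) : List A :=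
  List.ofFn fun j : Fin (n + 1) => u (n - (j : ℕ))

/-- `Δ₁⁺(x⁻) = ⋃ₙ ω₁⁺((x_{-n},…,x_0))`. -/
def Delta1 {A : Type*} (X : Set (ℤ → A)) (u : ℕ → A) : Set A :=
  ⋃ n : ℕ, omega1 X (lastWord u n)

/-- Property g: `Δ₁⁺(x⁻) ≠ ∅` for every `x⁻ ∈ X⁻`. -/
def PropertyG {A : Type*} (X : Set (ℤ → A)) : Prop :=
  ∀ u ∈ Xminus X, (Delta1 X u).Nonempty

/-- A g-function for `X`, encoded as a total function `g : (ℕ → A) → A → ℝ`: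
continuity (of the restriction to the graph of `Γ₁⁺`, i.e. of the map on
`{(x⁻,σ) : σ ∈ Γ₁⁺(x⁻)}`), values in `[0,1]` there, and the normalization
`∑_{σ ∈ Γ₁⁺(x⁻)} g (x⁻, σ) = 1`. -/
def IsGFunction {A : Type*} [Fintype A] [TopologicalSpace A] (X : Set (ℤ → A))
    (g : (ℕ → A) → A → ℝ) : Prop :=
  ContinuousOn (fun p : (ℕ → A) × A => g p.1 p.2)
      {p : (ℕ → A) × A | p.1 ∈ Xminus X ∧ p.2 ∈ Gamma1 X p.1} ∧
  (∀ u ∈ Xminus X, ∀ σ ∈ Gamma1 X u, g u σ ∈ Set.Icc (0 : ℝ) 1) ∧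
  (∀ u ∈ Xminus X, ∑ σ : A, (Gamma1 X u).indicator (g u) σ = 1)

/-- Property (D): for every admissible word `b` and letter `σ` with `bσ` admissible there
is a word `a` with `ab` admissible and `σ ∈ ω₁⁺(ab)`. -/
def PropertyD {A : Type*} (X : Set (ℤ → A)) : Prop :=
  ∀ (b : List A) (σ : A), b ≠ [] → Admissible X (b ++ [σ]) →
    ∃ a : List A, a ≠ [] ∧ Admissible X (a ++ b) ∧ σ ∈ omega1 X (a ++ b)

/-- A strict g-function: a g-function that is positive on `Δ₁⁺`. -/
def IsStrictGFunction {A : Type*} [Fintype A] [TopologicalSpace A] (X : Set (ℤ → A))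
    (g : (ℕ → A) → A → ℝ) : Prop :=
  IsGFunction X g ∧ ∀ u ∈ Xminus X, ∀ σ ∈ Delta1 X u, 0 < g u σ

/-- The left ray `u` can be followed in `X` by the word `a`. -/
def CanFollow {A : Type*} (X : Set (ℤ → A)) (u : ℕ → A) (a : List A) : Prop :=
  ∃ x ∈ X, (∀ n : ℕ, x (-(n : ℤ)) = u n) ∧
    ∀ j : Fin a.length, x (((j : ℕ) : ℤ) + 1) = a.get j

/-- The left ray `x⁻ · w` obtained by appending the word `w` to the left ray `u`,
re-indexed so that the last letter of `w` sits at coordinate `0`. -/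
def extendBy {A : Type*} (u : ℕ → A) (w : List A) : ℕ → A := fun n =>
  if h : n < w.length then w.get ⟨w.length - 1 - n, by omega⟩ else u (n - w.length)

/-- The measure `μ(x⁻)` generated by a g-function `g`, recorded by its cylinder values:
`μ(x⁻)(C(a)) = ∏_{k=1}^{N} g (x⁻·(a_1⋯a_{k-1}), a_k)` for words `a = (a_1,…,a_N)` that can
follow `x⁻` in `X`, and `μ(x⁻)(C(a)) = 0` for all other words. -/
noncomputable def muOf {A : Type*} (X : Set (ℤ → A)) (g : (ℕ → A) → A → ℝ) (u : ℕ → A) :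
    List A → ℝ :=
  Set.indicator {a : List A | CanFollow X u a}
    (fun a => ∏ k : Fin a.length, g (extendBy u (a.take (k : ℕ))) (a.get k))

/-! Guaranteed continuations compose: if `c ∈ ω⁺(b)` and `d ∈ ω⁺(bc)` then `cd ∈ ω⁺(b)`, and
conversely `cd ∈ ω⁺(b)` gives `d ∈ ω⁺(bc)`. Applying property (D) letter by letter from the
right end of an admissible word `τw` therefore produces a nonempty admissible `b` with
`w ∈ ω⁺(b)`. If moreover `x⁻` ends in `b`, then `w` can follow `x⁻`, and the `k`-th letter of
`w` lies in `ω₁⁺(b w_1⋯w_{k-1}) ⊆ Δ₁⁺(x⁻·w_1⋯w_{k-1})`, so every factor of the product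
defining `μ(x⁻)(C(w))` is positive because `g` is strict. Conversely, `μ(x⁻)(C(w)) > 0` forces
`w` to follow `x⁻` in `X`, so `w` is admissible. -/

section

variable {A : Type*} {X : Set (ℤ → A)}

theorem shift_mem_of_image_shiftMap_eq (hX : shiftMap '' X = X) {x : ℤ → A} (hx : x ∈ X)
    (k : ℤ) :
    (fun n => x (n + k)) ∈ X := by
  have shift_succ : ∀ y ∈ X, (fun n : ℤ => y (n + 1)) ∈ X := fun y hy =>
    hX ▸ mem_image_of_mem shiftMap hy
  have shift_pred : ∀ y ∈ X, (fun n : ℤ => y (n - 1)) ∈ X := by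
    intro y hy
    obtain ⟨z, hz, rfl⟩ := hX.symm ▸ hy
    simpa [shiftMap] using hz
  induction k using Int.induction_on with
  | zero => simpa using hx
  | succ k ih => simpa [add_assoc, add_comm (1 : ℤ)] using shift_succ _ ih
  | pred k ih => simpa [sub_eq_add_neg, add_assoc, add_comm (-1 : ℤ)] using shift_pred _ ih

def ReadsAt (x : ℤ → A) (w : List A) (i : ℤ) : Prop :=
  ∀ j (hj : j < w.length), x (i + j) = w[j]

theorem occurs_iff_exists_readsAt {w : List A} {x : ℤ → A} :
    Occurs w x ↔ ∃ i, ReadsAt x w i :=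
  ⟨fun ⟨i, h⟩ => ⟨i, fun j hj => h ⟨j, hj⟩⟩, fun ⟨i, h⟩ => ⟨i, fun j => h j j.isLt⟩⟩

theorem readsAt_singleton {x : ℤ → A} {σ : A} {i : ℤ} : ReadsAt x [σ] i ↔ x i = σ := by
  simp [ReadsAt]

theorem readsAt_append {x : ℤ → A} {v w : List A} {i : ℤ} :
    ReadsAt x (v ++ w) i ↔ ReadsAt x v i ∧ ReadsAt x w (i + v.length) := by
  constructor
  · intro h
    refine ⟨fun j hj => ?_, fun j hj => ?_⟩
    · have hj' := h j (by simp; omega)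
      rwa [List.getElem_append_left hj] at hj'
    · have hj' := h (v.length + j) (by simp; omega)
      rw [List.getElem_append_right (by omega)] at hj'
      simpa [add_assoc] using hj'
  · rintro ⟨hv, hw⟩ j hj
    rcases lt_or_ge j v.length with hjv | hjv
    · rw [List.getElem_append_left hjv]
      exact hv j hjv
    · rw [List.getElem_append_right hjv, ← hw (j - v.length) (by simp at hj; omega)]
      congr 1
      omega

theorem readsAt_shift {x : ℤ → A} {w : List A} {i k : ℤ} :
    ReadsAt (fun n => x (n + k)) w i ↔ ReadsAt x w (i + k) := by
  simp only [ReadsAt, add_right_comm i k]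

theorem ReadsAt.congr {x x' : ℤ → A} {w : List A} {i : ℤ} (hx : ReadsAt x w i)
    (h : ∀ n, i ≤ n → n < i + w.length → x' n = x n) : ReadsAt x' w i :=
  fun j hj => (h _ (by omega) (by omega)).trans (hx j hj)

theorem ReadsAt.eq_of_readsAt {x x' : ℤ → A} {w : List A} {i n : ℤ} (hx : ReadsAt x w i)
    (hx' : ReadsAt x' w i) (hin : i ≤ n) (hni : n < i + w.length) : x' n = x n := by
  obtain ⟨j, rfl⟩ : ∃ j : ℕ, n = i + j := ⟨(n - i).toNat, by omega⟩
  rw [hx j (by omega), hx' j (by omega)]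

theorem endsAtZero_iff {x : ℤ → A} {b : List A} :
    EndsAtZero x b ↔ ReadsAt x b (1 - b.length) := by
  refine ⟨fun h j hj => ?_, fun h j => ?_⟩
  · convert h ⟨j, hj⟩ using 2
    · ring
    · simp
  · convert h j j.isLt using 2
    · ring
    · simp

theorem omegaWord_iff {b c : List A} :
    OmegaWord X b c ↔ ∀ x ∈ X, ReadsAt x b (1 - b.length) →
      ∃ x' ∈ X, (∀ i ≤ 0, x' i = x i) ∧ ReadsAt x' c 1 := by
  have hc : ∀ x' : ℤ → A, (∀ j : Fin c.length, x' ((j : ℕ) + 1) = c.get j) ↔ ReadsAt x' c 1 :=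
    fun x' => ⟨fun h j hj => by rw [add_comm]; exact h ⟨j, hj⟩,
      fun h j => by rw [add_comm]; exact h j j.isLt⟩
  simp only [OmegaWord, endsAtZero_iff, hc]

/-- `OmegaWord` is anchored at coordinate `0`; shift invariance moves the anchor to any `p`. -/
theorem OmegaWord.exists_extension (hX : shiftMap '' X = X) {b c : List A}
    (h : OmegaWord X b c) {x : ℤ → A} (hx : x ∈ X) {p : ℤ}
    (hxb : ReadsAt x b (p + 1 - b.length)) :
    ∃ x' ∈ X, (∀ i ≤ p, x' i = x i) ∧ ReadsAt x' c (p + 1) := by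
  have hyb : ReadsAt (fun n => x (n + p)) b (1 - b.length) := by
    rw [readsAt_shift]
    convert hxb using 1
    ring
  obtain ⟨y', hy', hagree, hyc⟩ :=
    omegaWord_iff.1 h _ (shift_mem_of_image_shiftMap_eq hX hx p) hyb
  refine ⟨fun n => y' (n + -p), shift_mem_of_image_shiftMap_eq hX hy' (-p), fun i hi => ?_, ?_⟩
  · simpa using hagree (i + -p) (by omega)
  · rw [readsAt_shift]
    simpa using hyc

theorem OmegaWord.prepend {b c : List A} (e : List A) (h : OmegaWord X b c) :
    OmegaWord X (e ++ b) c := by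
  rw [omegaWord_iff] at h ⊢
  intro x hx hxb
  refine h x hx ?_
  convert (readsAt_append.1 hxb).2 using 1
  simp only [List.length_append]
  push_cast
  ring

theorem OmegaWord.left_of_append {b c d : List A} (h : OmegaWord X b (c ++ d)) :
    OmegaWord X b c := by
  rw [omegaWord_iff] at h ⊢
  intro x hx hxb
  obtain ⟨x', hx', hagree, hcd⟩ := h x hx hxb
  exact ⟨x', hx', hagree, (readsAt_append.1 hcd).1⟩

theorem OmegaWord.right_of_append (hX : shiftMap '' X = X) {b c d : List A}
    (h : OmegaWord X b (c ++ d)) : OmegaWord X (b ++ c) d := by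
  rw [omegaWord_iff]
  intro x hx hxbc
  obtain ⟨hxb, hxc⟩ := readsAt_append.1 hxbc
  have hxb' : ReadsAt x b (-c.length + 1 - b.length) := by
    convert hxb using 1
    simp only [List.length_append]
    push_cast
    ring
  obtain ⟨x', hx', hagree, hcd⟩ := h.exists_extension hX hx hxb'
  obtain ⟨hx'c, hx'd⟩ := readsAt_append.1 hcd
  refine ⟨x', hx', fun i hi => ?_, by simpa using hx'd⟩
  rcases le_or_gt i (-c.length) with hic | hic
  · exact hagree i hic
  · simp only [List.length_append, Nat.cast_add] at hxc
    exact hxc.eq_of_readsAt (by convert hx'c using 1; ring) (by omega) (by omega)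

theorem OmegaWord.append (hX : shiftMap '' X = X) {b c d : List A} (hc : OmegaWord X b c)
    (hd : OmegaWord X (b ++ c) d) : OmegaWord X b (c ++ d) := by
  rw [omegaWord_iff] at hc ⊢
  intro x hx hxb
  obtain ⟨x₁, hx₁, hagree₁, hx₁c⟩ := hc x hx hxb
  have hx₁b : ReadsAt x₁ b (1 - b.length) :=
    hxb.congr fun n _ hn => hagree₁ n (by omega)
  have hx₁bc : ReadsAt x₁ (b ++ c) (c.length + 1 - (b ++ c).length) := by
    rw [readsAt_append]
    constructor
    · convert hx₁b using 1
      simp only [List.length_append]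
      push_cast
      ring
    · convert hx₁c using 1
      simp only [List.length_append]
      push_cast
      ring
  obtain ⟨x₂, hx₂, hagree₂, hx₂d⟩ := hd.exists_extension hX hx₁ hx₁bc
  refine ⟨x₂, hx₂, fun i hi => (hagree₂ i (by omega)).trans (hagree₁ i hi), ?_⟩
  rw [readsAt_append]
  exact ⟨hx₁c.congr fun n _ hn => hagree₂ n (by omega), by rwa [add_comm]⟩

theorem mem_omega1_getElem (hX : shiftMap '' X = X) {b a : List A} (h : OmegaWord X b a)
    {k : ℕ} (hk : k < a.length) : a[k] ∈ omega1 X (b ++ a.take k) := by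
  rw [← List.take_append_drop k a, List.drop_eq_getElem_cons hk] at h
  exact (h.right_of_append hX).left_of_append (d := a.drop (k + 1))

theorem Admissible.exists_cons {w : List A} (h : Admissible X w) :
    ∃ τ : A, Admissible X (τ :: w) := by
  obtain ⟨x, hx, hocc⟩ := h
  obtain ⟨i, hi⟩ := occurs_iff_exists_readsAt.1 hocc
  refine ⟨x (i - 1), x, hx, occurs_iff_exists_readsAt.2 ⟨i - 1, ?_⟩⟩
  rw [← List.singleton_append, readsAt_append, readsAt_singleton]
  exact ⟨rfl, by simpa using hi⟩

theorem PropertyD.exists_omegaWord_of_admissible_append (hX : shiftMap '' X = X)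
    (hD : PropertyD X) {p q : List A} (hp : p ≠ []) (hpq : Admissible X (p ++ q)) :
    ∃ e, Admissible X (e ++ p) ∧ OmegaWord X (e ++ p) q := by
  induction q using List.reverseRecOn generalizing p with
  | nil =>
    refine ⟨[], by simpa using hpq, ?_⟩
    rw [omegaWord_iff]
    exact fun x hx _ => ⟨x, hx, fun _ _ => rfl, fun j hj => absurd hj (by simp)⟩
  | append_singleton q σ ih =>
    rw [← List.append_assoc] at hpq
    obtain ⟨a, -, ha, hσ⟩ := hD (p ++ q) σ (by simp [hp]) hpq
    rw [← List.append_assoc] at ha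
    obtain ⟨e, he, heq⟩ := ih (p := a ++ p) (by simp [hp]) ha
    refine ⟨e ++ a, by rwa [List.append_assoc], ?_⟩
    rw [List.append_assoc]
    refine heq.append hX ?_
    simpa [List.append_assoc] using OmegaWord.prepend e hσ

theorem PropertyD.exists_omegaWord (hX : shiftMap '' X = X) (hD : PropertyD X) {w : List A}
    (hw : Admissible X w) : ∃ b ≠ [], Admissible X b ∧ OmegaWord X b w := by
  obtain ⟨τ, hτ⟩ := hw.exists_cons
  obtain ⟨e, he, hew⟩ := hD.exists_omegaWord_of_admissible_append hX (p := [τ]) (by simp) hτ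
  exact ⟨e ++ [τ], by simp, he, hew⟩

/-- The ray `(x_i)_{i ≤ p}`, encoded as the elements of `Xminus` are. -/
def leftRay (x : ℤ → A) (p : ℤ) : ℕ → A := fun n => x (p - n)

theorem leftRay_mem_xminus (hX : shiftMap '' X = X) {x : ℤ → A} (hx : x ∈ X) (p : ℤ) :
    leftRay x p ∈ Xminus X :=
  ⟨_, shift_mem_of_image_shiftMap_eq hX hx p, fun n => by simp only [leftRay]; ring_nf⟩

theorem exists_leftRay_eq {u : ℕ → A} (hu : u ∈ Xminus X) : ∃ x ∈ X, leftRay x 0 = u := by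
  obtain ⟨x, hx, hux⟩ := hu
  exact ⟨x, hx, funext fun n => by simp [leftRay, hux]⟩

theorem endsIn_leftRay_iff {x : ℤ → A} {w : List A} {p : ℤ} :
    EndsIn (leftRay x p) w ↔ ReadsAt x w (p + 1 - w.length) := by
  have hidx : ∀ j < w.length, p - ((w.length - 1 - j : ℕ) : ℤ) = p + 1 - w.length + j := by
    intro j hj
    omega
  refine ⟨fun h j hj => ?_, fun h j => ?_⟩
  · rw [← hidx j hj]
    exact h ⟨j, hj⟩
  · simp only [leftRay, hidx j j.isLt]
    exact h j j.isLt

theorem extendBy_leftRay {x : ℤ → A} {t : List A} {p : ℤ} (h : ReadsAt x t (p + 1)) :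
    extendBy (leftRay x p) t = leftRay x (p + t.length) := by
  funext n
  unfold extendBy leftRay
  split_ifs with hn
  · rw [List.get_eq_getElem]
    dsimp only
    rw [← h _ (by omega)]
    congr 1
    omega
  · congr 1
    omega

theorem lastWord_eq_of_endsIn {u : ℕ → A} {w : List A} (hw : w ≠ []) (h : EndsIn u w) :
    lastWord u (w.length - 1) = w := by
  have hlen : 0 < w.length := List.length_pos_iff.2 hw
  apply List.ext_getElem (by simp [lastWord]; omega)
  intro j hj _
  simp only [lastWord, List.getElem_ofFn]
  exact h ⟨j, by simp [lastWord] at hj; omega⟩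

theorem mem_delta1_of_endsIn {u : ℕ → A} {w : List A} {σ : A} (hw : w ≠ []) (h : EndsIn u w)
    (hσ : σ ∈ omega1 X w) : σ ∈ Delta1 X u :=
  mem_iUnion.2 ⟨w.length - 1, by rwa [lastWord_eq_of_endsIn hw h]⟩

theorem Admissible.exists_endsIn (hX : shiftMap '' X = X) {b : List A} (h : Admissible X b) :
    ∃ u ∈ Xminus X, EndsIn u b := by
  obtain ⟨x, hx, hocc⟩ := h
  obtain ⟨i, hi⟩ := occurs_iff_exists_readsAt.1 hocc
  refine ⟨leftRay x (i + b.length - 1), leftRay_mem_xminus hX hx _, ?_⟩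
  rw [endsIn_leftRay_iff]
  convert hi using 1
  ring

theorem CanFollow.admissible {u : ℕ → A} {a : List A} (h : CanFollow X u a) :
    Admissible X a := by
  obtain ⟨x, hx, -, ha⟩ := h
  exact ⟨x, hx, 1, fun j => by rw [add_comm]; exact ha j⟩

theorem canFollow_leftRay {x : ℤ → A} (hx : x ∈ X) {a : List A} (h : ReadsAt x a 1) :
    CanFollow X (leftRay x 0) a :=
  ⟨x, hx, fun n => by simp [leftRay], fun j => by rw [add_comm]; exact h j j.isLt⟩

theorem admissible_of_muOf_pos {g : (ℕ → A) → A → ℝ} {u : ℕ → A} {w : List A}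
    (h : 0 < muOf X g u w) : Admissible X w :=
  CanFollow.admissible (Set.indicator_apply_ne_zero.1 h.ne').1

theorem muOf_of_canFollow {g : (ℕ → A) → A → ℝ} {u : ℕ → A} {a : List A}
    (h : CanFollow X u a) :
    muOf X g u a = ∏ k : Fin a.length, g (extendBy u (a.take k)) (a.get k) :=
  Set.indicator_of_mem (show a ∈ {a | CanFollow X u a} from h) _

theorem muOf_pos_of_omegaWord [Fintype A] [TopologicalSpace A] (hX : shiftMap '' X = X)
    {g : (ℕ → A) → A → ℝ} (hg : IsStrictGFunction X g) {a b : List A} (hb : b ≠ [])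
    (hba : OmegaWord X b a) {u : ℕ → A} (hu : u ∈ Xminus X) (hub : EndsIn u b) :
    0 < muOf X g u a := by
  obtain ⟨x, hx, rfl⟩ := exists_leftRay_eq hu
  rw [endsIn_leftRay_iff, zero_add] at hub
  obtain ⟨x', hx', hagree, hx'a⟩ := omegaWord_iff.1 hba x hx hub
  have hray : leftRay x 0 = leftRay x' 0 := funext fun n => (hagree _ (by omega)).symm
  have hx'b : ReadsAt x' b (1 - b.length) := hub.congr fun n _ hn => hagree n (by omega)
  rw [hray, muOf_of_canFollow (canFollow_leftRay hx' hx'a)]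
  refine Finset.prod_pos fun k _ => ?_
  have htake : ReadsAt x' (a.take k) 1 := by
    rw [← List.take_append_drop k a, readsAt_append] at hx'a
    exact hx'a.1
  have hlen : (a.take k).length = k := List.length_take_of_le k.isLt.le
  have hend : EndsIn (leftRay x' k) (b ++ a.take k) := by
    rw [endsIn_leftRay_iff, readsAt_append]
    constructor
    · convert hx'b using 1
      simp only [List.length_append, hlen]
      push_cast
      ring
    · convert htake using 1
      simp only [List.length_append, hlen]
      push_cast
      ring
  rw [extendBy_leftRay (by simpa using htake), hlen, zero_add]
  exact hg.2 _ (leftRay_mem_xminus hX hx' k) _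
    (mem_delta1_of_endsIn (by simp [hb]) hend (mem_omega1_getElem hX hba k.isLt))

end

theorem stmt8_general {A : Type*} [Fintype A] [TopologicalSpace A]
    (X : Set (ℤ → A)) (hX : IsSubshift X) (hPD : PropertyD X)
    (g : (ℕ → A) → A → ℝ) (hg : IsStrictGFunction X g) :
    (∀ w : List A, Admissible X w ↔ ∃ u ∈ Xminus X, 0 < muOf X g u w) ∧
    (∀ a b : List A, a ≠ [] → b ≠ [] → Admissible X a → Admissible X b →
      OmegaWord X b a → ∀ u ∈ Xminus X, EndsIn u b → 0 < muOf X g u a) := by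
  have hshift := hX.2.2
  refine ⟨fun w => ⟨fun hw => ?_, fun ⟨_, _, hpos⟩ => admissible_of_muOf_pos hpos⟩,
    fun a b _ hb _ _ hba u hu hub => muOf_pos_of_omegaWord hshift hg hb hba hu hub⟩
  obtain ⟨b, hb, hbadm, hbw⟩ := hPD.exists_omegaWord hshift hw
  obtain ⟨u, hu, hub⟩ := hbadm.exists_endsIn hshift
  exact ⟨u, hu, muOf_pos_of_omegaWord hshift hg hb hbw hu hub⟩

/-- Lemma 3.4.  For a subshift with properties g and (D) and a strict
g-function `g`, the admissible words are exactly the words `a` with `μ(x⁻)(C(a)) > 0`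
for some `x⁻ ∈ X⁻`; in particular `μ(x⁻)(C(a)) > 0` whenever `a ∈ ω⁺(b)` and `x⁻` ends
in `b`. -/
theorem stmt8 {A : Type*} [Fintype A] [Nonempty A] [TopologicalSpace A] [DiscreteTopology A]
    (X : Set (ℤ → A)) (hX : IsSubshift X) (hPg : PropertyG X) (hPD : PropertyD X)
    (g : (ℕ → A) → A → ℝ) (hg : IsStrictGFunction X g) :
    (∀ w : List A, Admissible X w ↔ ∃ u ∈ Xminus X, 0 < muOf X g u w) ∧
    (∀ a b : List A, a ≠ [] → b ≠ [] → Admissible X a → Admissible X b →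
      OmegaWord X b a → ∀ u ∈ Xminus X, EndsIn u b → 0 < muOf X g u a) :=
  stmt8_general X hX hPD g hg
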